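/- (Low-gain limit of power sharing: proportional sharing) Let B be the susceptance matrix of a connected weighted graph partitioned into loads and inverters, and K_I diagonal with strictly negative entries K_1,…,K_m. For ε > 0 define B_{red,ε} := B_LL − B_LI(B_II + εK_I)^{−1}B_IL and S_ε := εK_I(B_II + εK_I)^{−1}B_IL B_{red,ε}^{−1} (all inverses exist for ε > 0). Then as ε → 0⁺, S_ε converges to −(∑_{i=1}^m K_i)^{−1} K_I 1_{m×n}, i.e., entrywise (S_ε)_{ij} → −K_i / ∑_{k=1}^m K_k for every i, j; in particular each row limit is independent of the network topology and of the column index, so the limiting injections Q_I = (lim S_ε)Q_L are proportional to the gains K_i and to the total load ∑_j Q_{L,j}. -/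

import Mathlib

/-!
Write `M_ε = B + ε • diagonal (Sum.elim 0 k)`; then `B_II + ε K_I` is its lower right block and
`B_{red,ε}` the Schur complement of that block. Twice the quadratic form of `B` is minus the
weighted sum of the squares `(v p - v q)²`, so it is nonpositive and, the graph being connected,
vanishes only on constant vectors. As `ε K_I` is negative on nonzero constants, `-M_ε` is positive
definite for `ε > 0`, which makes `M_ε`, its block and the Schur complement invertible; the block
inverse formula gives `S_ε = -(K_I * (ε • M_ε⁻¹)_{IL})`.

Since `B *ᵥ 1 = 0`, the columns of `adjugate B` lie in `ker B = span 1`; being symmetric,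
`adjugate B` is a constant `α` times the all-ones matrix, and `α ≠ 0` because a principal minor of
`B` is nonsingular. Applying `adjugate M_ε * M_ε = det M_ε • 1` to `1` shows
`det M_ε / ε → α * ∑ l, k l ≠ 0`, so `ε • M_ε⁻¹ = (det M_ε / ε)⁻¹ • adjugate M_ε` tends to the
all-ones matrix divided by `∑ l, k l`.
-/

open Matrix

def suscGraph {V : Type*} (B : Matrix V V ℝ) : SimpleGraph V where
  Adj i j := i ≠ j ∧ 0 < B i j ∧ 0 < B j i
  symm := ⟨fun _ _ h => ⟨h.1.symm, h.2.2, h.2.1⟩⟩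
  loopless := ⟨fun _ h => h.1 rfl⟩

def IsSusceptance {V : Type*} [Fintype V] [DecidableEq V] (B : Matrix V V ℝ) : Prop :=
  B.IsSymm ∧ (∀ i j, i ≠ j → 0 ≤ B i j) ∧
    (∀ i, B i i = -∑ j ∈ Finset.univ.erase i, B i j) ∧ (suscGraph B).Connected

open Finset Filter Topology

namespace Matrix

lemma continuous_add_smul {ι κ R : Type*} [TopologicalSpace R] [Semiring R]
    [IsTopologicalSemiring R] (A D : Matrix ι κ R) : Continuous fun ε : R => A + ε • D :=
  continuous_const.add (continuous_id.smul continuous_const)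

section Limits

variable {V 𝕜 : Type*} [Fintype V] [DecidableEq V] [Field 𝕜] [TopologicalSpace 𝕜]
  [IsTopologicalDivisionRing 𝕜]

lemma tendsto_det_add_smul_div (A D : Matrix V V 𝕜) (hA : A *ᵥ 1 = 0) (i : V) :
    Tendsto (fun ε : 𝕜 => (A + ε • D).det / ε) (𝓝[≠] 0) (𝓝 ((A.adjugate *ᵥ (D *ᵥ 1)) i)) := by
  have hcont : Continuous fun ε : 𝕜 => ((A + ε • D).adjugate *ᵥ (D *ᵥ 1)) i :=
    (continuous_apply i).comp
      ((continuous_add_smul A D).matrix_adjugate.matrix_mulVec continuous_const)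
  have h0 := (hcont.tendsto 0).mono_left (nhdsWithin_le_nhds (s := {0}ᶜ))
  rw [zero_smul, add_zero] at h0
  refine h0.congr' ?_
  filter_upwards [self_mem_nhdsWithin] with ε (hε : ε ≠ 0)
  have key := congrFun (congrArg (· *ᵥ (1 : V → 𝕜)) (adjugate_mul (A + ε • D))) i
  simp only [← mulVec_mulVec, add_mulVec, hA, smul_mulVec, zero_add, mulVec_smul,
    one_mulVec, Pi.smul_apply, smul_eq_mul, Pi.one_apply, mul_one] at key
  rw [← key, mul_div_cancel_left₀ _ hε]

lemma tendsto_smul_inv_add_smul (A D : Matrix V V 𝕜) {c : 𝕜} (hc : c ≠ 0)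
    (h : Tendsto (fun ε : 𝕜 => (A + ε • D).det / ε) (𝓝[≠] 0) (𝓝 c)) :
    Tendsto (fun ε : 𝕜 => ε • (A + ε • D)⁻¹) (𝓝[≠] 0) (𝓝 (c⁻¹ • A.adjugate)) := by
  have hadj := ((continuous_add_smul A D).matrix_adjugate.tendsto 0).mono_left
    (nhdsWithin_le_nhds (s := {0}ᶜ))
  rw [zero_smul, add_zero] at hadj
  refine ((h.inv₀ hc).smul hadj).congr fun ε => ?_
  rw [inv_def, Ring.inverse_eq_inv, smul_smul, inv_div, div_eq_mul_inv]

end Limits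

lemma isUnit_det_of_posDef_neg {V K : Type*} [Fintype V] [DecidableEq V] [Field K]
    [PartialOrder K] [StarRing K] {M : Matrix V V K} (h : (-M).PosDef) : IsUnit M.det :=
  (M.isUnit_iff_isUnit_det).mp (neg_neg M ▸ h.isUnit.neg)

variable {l m α : Type*} [DecidableEq l] [DecidableEq m]

lemma add_smul_diagonal_inr_eq_fromBlocks [Semiring α] (B : Matrix (l ⊕ m) (l ⊕ m) α)
    (k : m → α) (ε : α) :
    B + ε • diagonal (Sum.elim 0 k) =
      fromBlocks B.toBlocks₁₁ B.toBlocks₁₂ B.toBlocks₂₁ (B.toBlocks₂₂ + ε • diagonal k) := by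
  ext (i | i) (j | j) <;> simp [diagonal_apply, toBlocks₁₁, toBlocks₁₂, toBlocks₂₁, toBlocks₂₂]

variable [Fintype l] [Fintype m] [CommRing α]

lemma isUnit_det_schur {A : Matrix l l α} {B : Matrix l m α} {C : Matrix m l α}
    {D : Matrix m m α} (hM : IsUnit (fromBlocks A B C D).det) (hD : IsUnit D.det) :
    IsUnit (A - B * D⁻¹ * C).det := by
  let := invertibleOfIsUnitDet D hD
  rw [det_fromBlocks₂₂, invOf_eq_nonsing_inv] at hM
  exact isUnit_of_mul_isUnit_right hM

lemma toBlocks₂₁_inv_fromBlocks {A : Matrix l l α} {B : Matrix l m α} {C : Matrix m l α}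
    {D : Matrix m m α} (hD : IsUnit D.det) (hS : IsUnit (A - B * D⁻¹ * C).det) :
    (fromBlocks A B C D)⁻¹.toBlocks₂₁ = -(D⁻¹ * C * (A - B * D⁻¹ * C)⁻¹) := by
  let := invertibleOfIsUnitDet D hD
  let : Invertible (A - B * ⅟D * C) := by
    rw [invOf_eq_nonsing_inv]
    exact invertibleOfIsUnitDet _ hS
  let := fromBlocks₂₂Invertible A B C D
  rw [← invOf_eq_nonsing_inv, invOf_fromBlocks₂₂_eq, toBlocks_fromBlocks₂₁]
  simp only [invOf_eq_nonsing_inv]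

end Matrix

namespace IsSusceptance

section

variable {V : Type*} [Fintype V] [DecidableEq V] {B : Matrix V V ℝ}

lemma apply_comm (hB : IsSusceptance B) (i j : V) : B i j = B j i :=
  hB.1.apply j i

lemma sum_apply_eq_zero (hB : IsSusceptance B) (i : V) : ∑ j, B i j = 0 := by
  rw [← add_sum_erase _ _ (mem_univ i), hB.2.2.1 i, neg_add_cancel]

lemma mulVec_one (hB : IsSusceptance B) : B *ᵥ 1 = 0 := by
  ext i
  simpa [mulVec, dotProduct] using hB.sum_apply_eq_zero i

lemma two_mul_dotProduct_mulVec_self (hB : IsSusceptance B) (v : V → ℝ) :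
    2 * (v ⬝ᵥ B *ᵥ v) = -∑ p, ∑ q, B p q * (v p - v q) ^ 2 := by
  have hrow : ∑ p, ∑ q, B p q * v p ^ 2 = 0 := by
    simp [← sum_mul, hB.sum_apply_eq_zero]
  have hcol : ∑ p, ∑ q, B p q * v q ^ 2 = 0 := by
    rw [sum_comm]
    simp [← sum_mul, hB.apply_comm _, hB.sum_apply_eq_zero]
  have hmid : v ⬝ᵥ B *ᵥ v = ∑ p, ∑ q, B p q * (v p * v q) := by
    simp only [dotProduct, mulVec, mul_sum]
    exact sum_congr rfl fun p _ => sum_congr rfl fun q _ => by ring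
  have hexpand : ∑ p, ∑ q, B p q * (v p - v q) ^ 2 =
      ∑ p, ∑ q, B p q * v p ^ 2 - 2 * ∑ p, ∑ q, B p q * (v p * v q) +
        ∑ p, ∑ q, B p q * v q ^ 2 := by
    simp only [mul_sum, ← sum_sub_distrib, ← sum_add_distrib]
    exact sum_congr rfl fun p _ => sum_congr rfl fun q _ => by ring
  rw [hexpand, hrow, hcol, hmid]
  ring

lemma mul_sub_sq_nonneg (hB : IsSusceptance B) (v : V → ℝ) (p q : V) :
    0 ≤ B p q * (v p - v q) ^ 2 := by
  rcases eq_or_ne p q with rfl | hpq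
  · simp
  · exact mul_nonneg (hB.2.1 p q hpq) (sq_nonneg _)

lemma dotProduct_mulVec_self_nonpos (hB : IsSusceptance B) (v : V → ℝ) :
    v ⬝ᵥ B *ᵥ v ≤ 0 := by
  have := sum_nonneg fun p (_ : p ∈ univ) =>
    sum_nonneg fun q (_ : q ∈ univ) => hB.mul_sub_sq_nonneg v p q
  linarith [hB.two_mul_dotProduct_mulVec_self v]

lemma apply_eq_of_dotProduct_mulVec_self_eq_zero (hB : IsSusceptance B) {v : V → ℝ}
    (hv : v ⬝ᵥ B *ᵥ v = 0) (p q : V) : v p = v q := by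
  have hsum : ∑ p, ∑ q, B p q * (v p - v q) ^ 2 = 0 := by
    linarith [hB.two_mul_dotProduct_mulVec_self v]
  have hadj : ∀ p q, (suscGraph B).Adj p q → v p = v q := by
    intro p q hpq
    have hterm : B p q * (v p - v q) ^ 2 = 0 :=
      (sum_eq_zero_iff_of_nonneg fun q _ => hB.mul_sub_sq_nonneg v p q).mp
        ((sum_eq_zero_iff_of_nonneg fun p _ =>
          sum_nonneg fun q _ => hB.mul_sub_sq_nonneg v p q).mp hsum p (mem_univ p))
        q (mem_univ q)
    have := (mul_eq_zero.mp hterm).resolve_left hpq.2.1.ne'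
    linarith [pow_eq_zero_iff (n := 2) two_ne_zero |>.mp this]
  obtain ⟨w⟩ := hB.2.2.2.preconnected p q
  induction w with
  | nil => rfl
  | cons h _ ih => exact (hadj _ _ h).trans ih

lemma apply_eq_of_mulVec_eq_zero (hB : IsSusceptance B) {v : V → ℝ} (hv : B *ᵥ v = 0)
    (p q : V) : v p = v q :=
  hB.apply_eq_of_dotProduct_mulVec_self_eq_zero (by rw [hv, dotProduct_zero]) p q

lemma posDef_neg_add_diagonal (hB : IsSusceptance B) {d : V → ℝ} (hd : ∀ i, d i ≤ 0)
    (hd' : ∃ i, d i < 0) : (-(B + diagonal d)).PosDef := by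
  refine PosDef.of_dotProduct_mulVec_pos ?_ fun x hx => ?_
  · exact (isHermitian_iff_isSymm.mpr hB.1).add (isHermitian_diagonal d) |>.neg
  have hdiag : x ⬝ᵥ diagonal d *ᵥ x = ∑ i, d i * x i ^ 2 := by
    simp only [dotProduct, mulVec_diagonal]
    exact sum_congr rfl fun i _ => by ring
  have hdiag_nonpos : ∀ i, d i * x i ^ 2 ≤ 0 := fun i =>
    mul_nonpos_of_nonpos_of_nonneg (hd i) (sq_nonneg _)
  rw [star_trivial, neg_mulVec, add_mulVec, dotProduct_neg, dotProduct_add, hdiag]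
  by_contra! hle
  have hquad := hB.dotProduct_mulVec_self_nonpos x
  have hsum : ∑ i, d i * x i ^ 2 = 0 :=
    le_antisymm (sum_nonpos fun i _ => hdiag_nonpos i) (by linarith)
  have hconst := hB.apply_eq_of_dotProduct_mulVec_self_eq_zero
    (le_antisymm hquad (by linarith))
  obtain ⟨i, hi⟩ := hd'
  have hxi : x i = 0 := by
    have := (sum_eq_zero_iff_of_nonpos fun j _ => hdiag_nonpos j).mp hsum i (mem_univ i)
    simpa [hi.ne] using this
  exact hx (funext fun j => (hconst j i).trans hxi)

lemma det_eq_zero [Nonempty V] (hB : IsSusceptance B) : B.det = 0 :=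
  exists_mulVec_eq_zero_iff.mp ⟨1, one_ne_zero, hB.mulVec_one⟩

lemma adjugate_apply_eq (hB : IsSusceptance B) (i j i' j' : V) :
    B.adjugate i j = B.adjugate i' j' := by
  have hcol : ∀ i i' j, B.adjugate i j = B.adjugate i' j := by
    intro i i' j
    have : Nonempty V := ⟨i⟩
    refine hB.apply_eq_of_mulVec_eq_zero (v := fun i => B.adjugate i j) ?_ i i'
    ext r
    simpa [mul_adjugate, hB.det_eq_zero, mulVec, dotProduct, mul_apply] using
      (congrFun (congrFun (mul_adjugate B) r) j)
  have hsymm := hB.1.adjugate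
  rw [hcol i j' j, hsymm.apply j j', hcol j i' j']

lemma adjugate_apply_self_ne_zero (hB : IsSusceptance B) (i : V) : B.adjugate i i ≠ 0 := by
  rw [adjugate_apply]
  intro hdet
  obtain ⟨v, hv, hker⟩ := exists_mulVec_eq_zero_iff.mpr hdet
  have hvi : v i = 0 := by
    simpa [mulVec, updateRow_self] using congrFun hker i
  have hBv : ∀ r, r ≠ i → (B *ᵥ v) r = 0 := fun r hr => by
    simpa [mulVec, updateRow_ne hr] using congrFun hker r
  have hquad : v ⬝ᵥ B *ᵥ v = 0 := by
    refine sum_eq_zero fun r _ => ?_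
    rcases eq_or_ne r i with rfl | hr
    · rw [hvi, zero_mul]
    · rw [hBv r hr, mul_zero]
  exact hv (funext fun p => (hB.apply_eq_of_dotProduct_mulVec_self_eq_zero hquad p i).trans hvi)

lemma tendsto_smul_inv_add_smul_diagonal (hB : IsSusceptance B) {d : V → ℝ}
    (hd : ∑ i, d i ≠ 0) :
    Tendsto (fun ε : ℝ => ε • (B + ε • diagonal d)⁻¹) (𝓝[≠] 0)
      (𝓝 (of fun _ _ => (∑ i, d i)⁻¹)) := by
  obtain ⟨i₀, -, -⟩ := exists_ne_zero_of_sum_ne_zero hd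
  have hα := hB.adjugate_apply_self_ne_zero i₀
  have hc : (B.adjugate *ᵥ (diagonal d *ᵥ 1)) i₀ = B.adjugate i₀ i₀ * ∑ i, d i := by
    have hd1 : diagonal d *ᵥ 1 = d := funext fun i => by simp [mulVec_diagonal]
    rw [hd1]
    simp [mulVec, dotProduct, hB.adjugate_apply_eq _ _ i₀ i₀, mul_sum]
  convert tendsto_smul_inv_add_smul B _ (hc ▸ mul_ne_zero hα hd)
    (tendsto_det_add_smul_div B _ hB.mulVec_one i₀) using 2
  ext i j
  simp [hc, hB.adjugate_apply_eq i j i₀ i₀, hα]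

end

section

variable {l m : Type*} [Fintype l] [Fintype m] [DecidableEq l] [DecidableEq m]
  {B : Matrix (l ⊕ m) (l ⊕ m) ℝ} {k : m → ℝ}

lemma posDef_neg_fromBlocks_add_smul_diagonal [Nonempty m] (hB : IsSusceptance B)
    (hk : ∀ i, k i < 0) {ε : ℝ} (hε : 0 < ε) :
    (-fromBlocks B.toBlocks₁₁ B.toBlocks₁₂ B.toBlocks₂₁
      (B.toBlocks₂₂ + ε • diagonal k)).PosDef := by
  have hεk (i : m) : ε * k i < 0 := mul_neg_of_pos_of_neg hε (hk i)
  rw [← add_smul_diagonal_inr_eq_fromBlocks, ← diagonal_smul]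
  exact hB.posDef_neg_add_diagonal (fun i => by cases i <;> simp [(hεk _).le])
    ⟨Sum.inr (Classical.arbitrary m), hεk _⟩

lemma tendsto_smul_toBlocks₂₁_inv_add_smul_diagonal (hB : IsSusceptance B)
    (hk : ∑ i, k i ≠ 0) :
    Tendsto (fun ε : ℝ => ε • (B + ε • diagonal (Sum.elim 0 k))⁻¹.toBlocks₂₁) (𝓝[≠] 0)
      (𝓝 (of fun _ _ => (∑ i, k i)⁻¹)) := by
  have hlim := hB.tendsto_smul_inv_add_smul_diagonal (d := Sum.elim 0 k) (by simpa using hk)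
  rw [show ∑ i, Sum.elim (0 : l → ℝ) k i = ∑ i, k i by simp] at hlim
  exact ((continuous_id.matrix_submatrix Sum.inr Sum.inl).tendsto _).comp hlim

end

end IsSusceptance

theorem power_sharing_low_gain_limit_general {n m : ℕ} (hm : 0 < m)
    (B : Matrix (Fin n ⊕ Fin m) (Fin n ⊕ Fin m) ℝ) (hB : IsSusceptance B)
    (k : Fin m → ℝ) (hk : ∀ i, k i < 0) :
    (∀ ε : ℝ, 0 < ε →
      IsUnit (B.toBlocks₂₂ + ε • Matrix.diagonal k).det ∧
      IsUnit (B.toBlocks₁₁ -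
        B.toBlocks₁₂ * (B.toBlocks₂₂ + ε • Matrix.diagonal k)⁻¹ *
          B.toBlocks₂₁).det) ∧
    Filter.Tendsto
      (fun ε : ℝ =>
        (ε • Matrix.diagonal k) * (B.toBlocks₂₂ + ε • Matrix.diagonal k)⁻¹ *
          B.toBlocks₂₁ *
          (B.toBlocks₁₁ -
            B.toBlocks₁₂ * (B.toBlocks₂₂ + ε • Matrix.diagonal k)⁻¹ *
              B.toBlocks₂₁)⁻¹)
      (nhdsWithin 0 (Set.Ioi 0))
      (nhds (Matrix.of fun (i : Fin m) (_ : Fin n) => -k i / ∑ l, k l)) := by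
  have : Nonempty (Fin m) := ⟨⟨0, hm⟩⟩
  have h22 (ε : ℝ) (hε : 0 < ε) : IsUnit (B.toBlocks₂₂ + ε • diagonal k).det :=
    isUnit_det_of_posDef_neg
      ((hB.posDef_neg_fromBlocks_add_smul_diagonal hk hε).submatrix Sum.inr_injective)
  have hS (ε : ℝ) (hε : 0 < ε) :=
    isUnit_det_schur (isUnit_det_of_posDef_neg (hB.posDef_neg_fromBlocks_add_smul_diagonal hk hε))
      (h22 ε hε)
  refine ⟨fun ε hε => ⟨h22 ε hε, hS ε hε⟩, ?_⟩
  have hlim := (hB.tendsto_smul_toBlocks₂₁_inv_add_smul_diagonal (sum_neg (fun i _ => hk i)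
    univ_nonempty).ne).mono_left (nhdsWithin_mono _ fun x (hx : 0 < x) => hx.ne')
  have hvalue : -(diagonal k * of fun (_ : Fin m) (_ : Fin n) => (∑ l, k l)⁻¹) =
      of fun i _ => -k i / ∑ l, k l := by
    ext i j
    simp [div_eq_mul_inv]
  have hcont : Continuous fun X : Matrix (Fin m) (Fin n) ℝ => -(diagonal k * X) :=
    (continuous_const.matrix_mul continuous_id).neg
  rw [← hvalue]
  refine ((hcont.tendsto _).comp hlim).congr' ?_
  filter_upwards [self_mem_nhdsWithin] with ε (hε : 0 < ε)
  rw [Function.comp_apply, add_smul_diagonal_inr_eq_fromBlocks,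
    toBlocks₂₁_inv_fromBlocks (h22 ε hε) (hS ε hε)]
  simp only [smul_neg, Matrix.mul_neg, neg_neg, Matrix.mul_smul, Matrix.smul_mul, Matrix.mul_assoc]

/-- Low-gain limit of power sharing: proportional sharing: all the
inverses defining `S_ε = ε K_I (B_II + ε K_I)⁻¹ B_IL B_{red,ε}⁻¹` exist for
`ε > 0`, and as `ε → 0⁺` the matrix `S_ε` converges to the matrix with entries
`-K_i / Σ_l K_l`, i.e. to `-(Σ_i K_i)⁻¹ K_I 1_{m×n}`; in particular the limit is
independent of the network topology and of the column index. -/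
theorem power_sharing_low_gain_limit {n m : ℕ} (hn : 0 < n) (hm : 0 < m)
    (B : Matrix (Fin n ⊕ Fin m) (Fin n ⊕ Fin m) ℝ) (hB : IsSusceptance B)
    (k : Fin m → ℝ) (hk : ∀ i, k i < 0) :
    (∀ ε : ℝ, 0 < ε →
      IsUnit (B.toBlocks₂₂ + ε • Matrix.diagonal k).det ∧
      IsUnit (B.toBlocks₁₁ -
        B.toBlocks₁₂ * (B.toBlocks₂₂ + ε • Matrix.diagonal k)⁻¹ *
          B.toBlocks₂₁).det) ∧
    Filter.Tendsto
      (fun ε : ℝ =>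
        (ε • Matrix.diagonal k) * (B.toBlocks₂₂ + ε • Matrix.diagonal k)⁻¹ *
          B.toBlocks₂₁ *
          (B.toBlocks₁₁ -
            B.toBlocks₁₂ * (B.toBlocks₂₂ + ε • Matrix.diagonal k)⁻¹ *
              B.toBlocks₂₁)⁻¹)
      (nhdsWithin 0 (Set.Ioi 0))
      (nhds (Matrix.of fun (i : Fin m) (_ : Fin n) => -k i / ∑ l, k l)) :=
  power_sharing_low_gain_limit_general hm B hB k hk
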